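/- arXiv:2212.05520 — 2 statements merged into one kernel-verified Lean document; each statement's English description precedes it below -/
import Mathlib

section
/- There is an a.d.-family 𝒜 of subsets of ℕ of cardinality continuum which contains a 2-Luzin gap but contains no Luzin subfamily (i.e., no subfamily of 𝒜 is a Luzin family). -/
open Set Filter Cardinal

noncomputable section

/-- The Banach space `ℓ∞` of bounded real sequences with the sup norm. -/
abbrev Linfty : Type := lp (fun _ : ℕ => ℝ) ⊤

/-- An a.d.-family: an uncountable family of infinite subsets of `ℕ` which is
pairwise almost disjoint. -/
def ADFamily (𝒜 : Set (Set ℕ)) : Prop :=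
  ¬𝒜.Countable ∧ (∀ A ∈ 𝒜, A.Infinite) ∧
    ∀ A ∈ 𝒜, ∀ B ∈ 𝒜, A ≠ B → (A ∩ B).Finite

/-- A maximal a.d.-family. -/
def MaximalADFamily (𝒜 : Set (Set ℕ)) : Prop :=
  ADFamily 𝒜 ∧ ∀ X : Set ℕ, X.Infinite → ∃ A ∈ 𝒜, (X ∩ A).Infinite

/-- `A =* B` : the symmetric difference is finite. -/
def eqStar (A B : Set ℕ) : Prop := (symmDiff A B).Finite

/-- Finite subfamilies `a`, `b` of `𝒜` represent the pair `p`. -/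
def Represents (𝒜 : Set (Set ℕ)) (p : Set ℕ × Set ℕ) (a b : Finset (Set ℕ)) : Prop :=
  ↑a ⊆ 𝒜 ∧ ↑b ⊆ 𝒜 ∧ eqStar p.1 (⋃ A ∈ a, A) ∧ eqStar p.2 (⋃ B ∈ b, B)

/-- `p` is a condition of the splitting partial order `ℙ_𝒜`. -/
def SplitCond (𝒜 : Set (Set ℕ)) (p : Set ℕ × Set ℕ) : Prop :=
  p.1 ∩ p.2 = ∅ ∧ ∃ a b : Finset (Set ℕ), Represents 𝒜 p a b

/-- `Extends p q` means `p ≤ q` in `ℙ_𝒜`. -/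
def Extends (p q : Set ℕ × Set ℕ) : Prop := q.1 ⊆ p.1 ∧ q.2 ⊆ p.2

/-- Compatibility in `ℙ_𝒜`. -/
def Compat (𝒜 : Set (Set ℕ)) (p q : Set ℕ × Set ℕ) : Prop :=
  ∃ r, SplitCond 𝒜 r ∧ Extends r p ∧ Extends r q

/-- An antichain of `ℙ_𝒜`: a set of pairwise incompatible conditions. -/
def SplitAntichain (𝒜 : Set (Set ℕ)) (P : Set (Set ℕ × Set ℕ)) : Prop :=
  (∀ p ∈ P, SplitCond 𝒜 p) ∧ ∀ p ∈ P, ∀ q ∈ P, p ≠ q → ¬Compat 𝒜 p q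

/-- `ℙ_𝒜` satisfies the countable chain condition. -/
def SplitCCC (𝒜 : Set (Set ℕ)) : Prop :=
  ∀ P : Set (Set ℕ × Set ℕ), SplitAntichain 𝒜 P → P.Countable

/-- A centered subset of `ℙ_𝒜`: every finite subset has a common lower bound in `ℙ_𝒜`. -/
def SplitCentered (𝒜 : Set (Set ℕ)) (P : Set (Set ℕ × Set ℕ)) : Prop :=
  ∀ F : Finset (Set ℕ × Set ℕ), ↑F ⊆ P →
    ∃ r, SplitCond 𝒜 r ∧ ∀ p ∈ F, Extends r p

/-- `ℙ_𝒜` is σ-centered. -/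
def SplitSigmaCentered (𝒜 : Set (Set ℕ)) : Prop :=
  ∃ P : ℕ → Set (Set ℕ × Set ℕ),
    (⋃ n, P n) = {p | SplitCond 𝒜 p} ∧ ∀ n, SplitCentered 𝒜 (P n)

/-- `ℙ_𝒜` has precaliber `κ`. -/
def SplitPrecaliber (𝒜 : Set (Set ℕ)) (κ : Cardinal) : Prop :=
  ∀ P : Set (Set ℕ × Set ℕ), (∀ p ∈ P, SplitCond 𝒜 p) → #P = κ →
    ∃ Q ⊆ P, #Q = κ ∧ SplitCentered 𝒜 Q

/-- Two conditions are essentially distinct if their (uniquely determined)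
representing finite subfamilies differ on both coordinates. -/
def EssDistinct (𝒜 : Set (Set ℕ)) (p q : Set ℕ × Set ℕ) : Prop :=
  ∀ ap bp aq bq : Finset (Set ℕ), Represents 𝒜 p ap bp → Represents 𝒜 q aq bq →
    ap ≠ aq ∧ bp ≠ bq

/-- An antiramsey a.d.-family. -/
def Antiramsey (𝒜 : Set (Set ℕ)) : Prop :=
  ADFamily 𝒜 ∧
  ∀ P : Set (Set ℕ × Set ℕ), (∀ p ∈ P, SplitCond 𝒜 p) → ¬P.Countable →
    (∀ p ∈ P, ∀ q ∈ P, p ≠ q → EssDistinct 𝒜 p q) →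
    (∃ p ∈ P, ∃ q ∈ P, p ≠ q ∧ Compat 𝒜 p q) ∧ (∃ p ∈ P, ∃ q ∈ P, ¬Compat 𝒜 p q)

/-- The first uncountable ordinal. -/
def omega1 : Ordinal.{0} := (Cardinal.aleph 1).ord

/-- A Luzin family. -/
def IsLuzinFamily (𝒜 : Set (Set ℕ)) : Prop :=
  ADFamily 𝒜 ∧ ∃ A : Ordinal.{0} → Set ℕ,
    (∀ ξ < omega1, A ξ ∈ 𝒜) ∧
    (∀ B ∈ 𝒜, ∃ ξ < omega1, A ξ = B) ∧
    (∀ ξ < omega1, ∀ η < omega1, ξ ≠ η → A ξ ≠ A η) ∧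
    ∀ η < omega1, ∀ m : ℕ, {ξ : Ordinal | ξ < η ∧ sSup (A ξ ∩ A η) = m}.Finite

/-- `(B i : i < n)` forms an `n`-Luzin gap. -/
def IsNLuzinGap (n : ℕ) (B : Fin n → Ordinal.{0} → Set ℕ) : Prop :=
  (∀ i : Fin n, ∀ α < omega1, ∀ β < omega1, α ≠ β → B i α ≠ B i β) ∧
  (∀ i j : Fin n, i ≠ j → ∀ α < omega1, ∀ β < omega1, B i α ≠ B j β) ∧
  ∃ m : ℕ,
    (∀ i j : Fin n, i < j → ∀ α < omega1, B i α ∩ B j α ⊆ Set.Iio m) ∧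
    (∀ α < omega1, ∀ β < omega1, α ≠ β →
      ¬(⋃ (i : Fin n) (j : Fin n) (_ : i ≠ j), B i α ∩ B j β) ⊆ Set.Iio m)

/-- `𝒜` contains an `n`-Luzin gap. -/
def ContainsNLuzinGap (𝒜 : Set (Set ℕ)) (n : ℕ) : Prop :=
  ∃ B : Fin n → Ordinal.{0} → Set ℕ,
    (∀ i : Fin n, ∀ α < omega1, B i α ∈ 𝒜) ∧ IsNLuzinGap n B

-- The characteristic function of `A ⊆ ℕ` as an element of `ℓ∞`.
open Classical in
def indicatorLinfty (A : Set ℕ) : Linfty :=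
  ⟨fun n => if n ∈ A then (1 : ℝ) else 0, by
    apply memℓp_infty
    refine ⟨1, ?_⟩
    rintro x ⟨n, rfl⟩
    dsimp only
    split <;> simp⟩

/-- The subset `c₀` of `ℓ∞`. -/
def c0Set : Set Linfty := {f | Tendsto (fun n => f n) atTop (nhds 0)}

/-- The Johnson–Lindenstrauss space `X_𝒜`: the closed linear span of
`c₀ ∪ {1_A : A ∈ 𝒜}` in `ℓ∞`, as a (closed) submodule. -/
def XA (𝒜 : Set (Set ℕ)) : Submodule ℝ Linfty :=
  (Submodule.span ℝ (c0Set ∪ indicatorLinfty '' 𝒜)).topologicalClosure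

/-- The norm `‖·‖_{∞,2}` on `ℓ∞`. -/
def norm12 (f : Linfty) : ℝ :=
  ‖f‖ + Real.sqrt (∑' n : ℕ, (f n) ^ 2 / 2 ^ (n + 1))

/-- The unit sphere of `(X_𝒜, ‖·‖∞)`. -/
def sphereInf (𝒜 : Set (Set ℕ)) : Set Linfty :=
  {f : Linfty | f ∈ XA 𝒜 ∧ ‖f‖ = 1}

/-- The unit sphere of `(X_𝒜, ‖·‖_{∞,2})`. -/
def sphere12 (𝒜 : Set (Set ℕ)) : Set Linfty :=
  {f : Linfty | f ∈ XA 𝒜 ∧ norm12 f = 1}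

/-- The Open Coloring Axiom. -/
def OCA : Prop :=
  ∀ (X : Type) [MetricSpace X], TopologicalSpace.SeparableSpace X →
    ∀ K : Set (X × X), IsOpen K → (∀ x y : X, (x, y) ∈ K → (y, x) ∈ K) →
      (∃ Y : Set X, ¬Y.Countable ∧ ∀ x ∈ Y, ∀ y ∈ Y, x ≠ y → (x, y) ∈ K) ∨
      (∃ C : ℕ → Set X, (⋃ n, C n) = Set.univ ∧
        ∀ n, ∀ x ∈ C n, ∀ y ∈ C n, x ≠ y → (x, y) ∉ K)

/-- An `ℝ`-embeddable a.d.-family. -/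
def REmbeddable (𝒜 : Set (Set ℕ)) : Prop :=
  ∃ (f : ℕ → ℚ) (r : Set ℕ → ℝ), Function.Injective f ∧
    (∀ A ∈ 𝒜, Irrational (r A) ∧
      ∀ ε : ℝ, 0 < ε → {n ∈ A | ε ≤ |(f n : ℝ) - r A|}.Finite) ∧
    (∀ A ∈ 𝒜, ∀ B ∈ 𝒜, A ≠ B → r A ≠ r B)

/-- The Continuum Hypothesis. -/
def CH : Prop := (Cardinal.continuum : Cardinal.{0}) = Cardinal.aleph 1

end

/-!
Take the binary tree coded in `ℕ` and, for each branch `x` of Cantor space, the set `branch x`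
of its nodes and the set `siblings x` of the nodes at which other branches leave it. Then
`siblings x ∩ branch x = ∅`, while `siblings x ∩ branch y` is the node where `x` leaves `y`,
so any `ℵ₁` branches give a 2-Luzin gap.

No subfamily is Luzin: for `x ≠ z`, the trace of `branch y` (or `siblings y`) on `branch x`
(or `siblings x`) only depends on where `x` leaves `z`, as soon as `y` is close enough to `z`.
In an uncountable set `X` of branches pick a countable dense `Y ⊆ X` and `z ∈ X \ Y`. In a
Luzin enumeration all members indexed by `Y` come before some countable stage, and every later
`x ∈ X` has the same intersection with infinitely many of them, against finite-to-one-ness.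
-/

open Function Topology TopologicalSpace Encodable PiNat

namespace PiNat

theorem res_eq_res_iff {α : Type*} {x y : ℕ → α} {m n : ℕ} :
    res x m = res y n ↔ m = n ∧ y ∈ cylinder x m := by
  refine ⟨fun h => ?_, fun ⟨hmn, hy⟩ => hmn ▸ res_eq_res.2 fun i hi => (hy i hi).symm⟩
  obtain rfl : m = n := by simpa using congrArg List.length h
  exact ⟨rfl, fun i hi => (res_eq_res.1 h hi).symm⟩

theorem eventually_mem_cylinder_iff {E : ℕ → Type*} [∀ n, TopologicalSpace (E n)]
    [∀ n, DiscreteTopology (E n)] {x z : ∀ n, E n} (h : x ≠ z) :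
    ∀ᶠ y in 𝓝 z, ∀ n, y ∈ cylinder x n ↔ z ∈ cylinder x n := by
  set d := firstDiff x z
  have key : ∀ w ∈ cylinder z (d + 1), ∀ n, w ∈ cylinder x n ↔ n ≤ d := by
    intro w hw n
    refine ⟨fun hwx => ?_, fun hn i hi => ?_⟩
    · by_contra! hdn
      exact apply_firstDiff_ne h ((hwx d hdn).symm.trans (hw d d.lt_succ_self))
    · exact (hw i (by omega)).trans (apply_eq_of_lt_firstDiff (hi.trans_le hn)).symm
  filter_upwards [(isOpen_cylinder E z (d + 1)).mem_nhds (self_mem_cylinder z _)] with y hy n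
  rw [key y hy, key z (self_mem_cylinder z _)]

theorem finite_setOf_mem_cylinder {E : ℕ → Type*} {x y : ∀ n, E n} (h : x ≠ y) :
    {n | y ∈ cylinder x n}.Finite :=
  (finite_Iic (firstDiff y x)).subset fun n hn => (mem_cylinder_iff_le_firstDiff h.symm n).1 hn

theorem eq_of_forall_mem_cylinder {E : ℕ → Type*} {x y : ∀ n, E n}
    (h : ∀ n, y ∈ cylinder x n) : y = x :=
  funext fun i => h (i + 1) i i.lt_succ_self

end PiNat

theorem countable_Iic_of_lt_omega1 {δ : Ordinal.{0}} (hδ : δ < omega1) : (Iic δ).Countable := by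
  rw [← Order.Iio_succ, ← le_aleph0_iff_set_countable, mk_Iio_ordinal, lift_le_aleph0,
    ← lt_aleph_one_iff, ← lt_ord]
  exact (isSuccLimit_ord (aleph0_le_aleph 1)).succ_lt hδ

namespace IsLuzinFamily

variable {ℬ : Set (Set ℕ)}

theorem countable_setOf_infinite_fiber (hℬ : IsLuzinFamily ℬ) {𝒞 : Set (Set ℕ)}
    (h𝒞 : 𝒞.Countable) (h𝒞ℬ : 𝒞 ⊆ ℬ) :
    {P ∈ ℬ | ∃ S, {C ∈ 𝒞 | C ∩ P = S}.Infinite}.Countable := by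
  obtain ⟨-, A, -, hA, -, hfin⟩ := hℬ
  choose! ξ hξ hAξ using hA
  have := h𝒞.to_subtype
  set δ := ⨆ C : 𝒞, ξ C
  have hδ : δ < omega1 := by
    rw [omega1, ord_aleph]
    exact Ordinal.iSup_lt_omega_one fun C => ord_aleph 1 ▸ hξ C (h𝒞ℬ C.2)
  refine ((countable_Iic_of_lt_omega1 hδ).image A).mono ?_
  rintro P ⟨hP, S, hS⟩
  by_contra hPδ
  have hδη : δ < ξ P := not_le.1 fun h => hPδ ⟨ξ P, h, hAξ P hP⟩
  refine (hfin (ξ P) (hξ P hP) (sSup S)).not_infinite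
    ((hS.image (f := ξ) fun C hC C' hC' h => ?_).mono ?_)
  · rw [← hAξ C (h𝒞ℬ hC.1), h, hAξ C' (h𝒞ℬ hC'.1)]
  · rintro _ ⟨C, ⟨hC, hCS⟩, rfl⟩
    refine ⟨(Ordinal.le_iSup (fun C : 𝒞 => ξ C) ⟨C, hC⟩).trans_lt hδη, ?_⟩
    rw [hAξ C (h𝒞ℬ hC), hAξ P hP, hCS]

theorem countable_of_image_subset {T : Type*} [TopologicalSpace T] [MetrizableSpace T]
    [SecondCountableTopology T] (hℬ : IsLuzinFamily ℬ) {F : T → Set ℕ} (hF : Injective F)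
    (hloc : ∀ x z, x ≠ z → ∀ᶠ y in 𝓝 z, F y ∩ F x = F z ∩ F x) {X : Set T}
    (hXℬ : F '' X ⊆ ℬ) : X.Countable := by
  by_contra hX
  obtain ⟨Y, hYX, hY, hXY⟩ :=
    (IsSeparable.of_separableSpace X).exists_countable_dense_subset
  obtain ⟨z, hzX, hzY⟩ : (X \ Y).Nonempty := nonempty_of_not_subset fun h => hX (hY.mono h)
  have hz : AccPt z (𝓟 Y) := by
    rw [accPt_principal_iff_clusterPt, sdiff_singleton_eq_self hzY]
    exact mem_closure_iff_clusterPt.1 (hXY hzX)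
  have hfiber : X \ insert z Y ⊆
      F ⁻¹' {P ∈ ℬ | ∃ S, {C ∈ F '' Y | C ∩ P = S}.Infinite} := by
    intro x ⟨hxX, hxzY⟩
    obtain ⟨U, hU, hUF⟩ := (hloc x z fun h => hxzY (h ▸ mem_insert z Y)).exists_mem
    refine ⟨hXℬ (mem_image_of_mem F hxX), F z ∩ F x, ?_⟩
    refine ((Set.Infinite.of_accPt (hz.nhds_inter hU)).image hF.injOn).mono ?_
    rintro _ ⟨y, ⟨hyU, hyY⟩, rfl⟩
    exact ⟨mem_image_of_mem F hyY, hUF y hyU⟩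
  refine hX (((hℬ.countable_setOf_infinite_fiber (hY.image F) ?_).preimage hF).union
    (hY.insert z) |>.mono fun x hx => ?_)
  · exact (image_mono hYX).trans hXℬ
  · by_cases h : x ∈ insert z Y
    exacts [Or.inr h, Or.inl (hfiber ⟨hx, h⟩)]

end IsLuzinFamily

theorem exists_injOn_Iio_omega1 {T : Type} [Nonempty T] (hT : ℵ₁ ≤ #T) :
    ∃ e : Ordinal.{0} → T, InjOn e (Iio omega1) := by
  obtain ⟨f⟩ : Nonempty (Iio omega1 ↪ T) := by
    rw [← lift_mk_le', mk_Iio_ordinal, omega1, card_ord, lift_lift, Cardinal.lift_le]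
    exact hT
  refine ⟨fun α => if h : α < omega1 then f ⟨α, h⟩ else Classical.arbitrary T,
    fun α hα β hβ h => ?_⟩
  simp only [dif_pos (show α < omega1 from hα), dif_pos (show β < omega1 from hβ)] at h
  exact congrArg Subtype.val (f.injective h)

theorem containsNLuzinGap_two {T : Type} {𝒜 : Set (Set ℕ)} {F G : T → Set ℕ} (hT : ℵ₁ ≤ #T)
    (hF : Injective F) (hG : Injective G) (hFG : ∀ x y, F x ≠ G y) (hF𝒜 : ∀ x, F x ∈ 𝒜)
    (hG𝒜 : ∀ x, G x ∈ 𝒜) (hdiag : ∀ x, F x ∩ G x = ∅)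
    (hcross : ∀ x y, x ≠ y → (F x ∩ G y).Nonempty) : ContainsNLuzinGap 𝒜 2 := by
  have : Nonempty T := mk_ne_zero_iff.1 (aleph_pos 1 |>.trans_le hT).ne'
  obtain ⟨e, he⟩ := exists_injOn_Iio_omega1 hT
  have hne : ∀ α < omega1, ∀ β < omega1, α ≠ β → e α ≠ e β := fun α hα β hβ hαβ h =>
    hαβ (he hα hβ h)
  refine ⟨fun i α => ![F, G] i (e α), ?_, ?_, ?_, 0, ?_, ?_⟩
  · simp [Fin.forall_fin_two, hF𝒜, hG𝒜]
  · simp only [Fin.forall_fin_two, Matrix.cons_val_zero, Matrix.cons_val_one]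
    exact ⟨fun α hα β hβ hαβ => hF.ne (hne α hα β hβ hαβ),
      fun α hα β hβ hαβ => hG.ne (hne α hα β hβ hαβ)⟩
  · simp [Fin.forall_fin_two, hFG, fun x y => (hFG y x).symm]
  · simp [Fin.forall_fin_two, hdiag]
  · intro α hα β hβ hαβ hsub
    obtain ⟨m, hm⟩ := hcross (e α) (e β) (hne α hα β hβ hαβ)
    simp only [iUnion_subset_iff] at hsub
    exact Nat.not_lt_zero m (hsub 0 1 (by decide) hm)

namespace CantorTree

def node (x : ℕ → Bool) (n : ℕ) : ℕ := encode (res x n)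

-- `res x n` lists `x (n - 1), …, x 0`, so `(!x n) :: res x n` is the node of level `n + 1`
-- at which a branch leaves `x`.
def sibling (x : ℕ → Bool) (n : ℕ) : ℕ := encode ((!x n) :: res x n)

def branch (x : ℕ → Bool) : Set ℕ := range (node x)

def siblings (x : ℕ → Bool) : Set ℕ := range (sibling x)

variable {x y : ℕ → Bool} {n : ℕ}

theorem node_mem_branch_iff : node x n ∈ branch y ↔ y ∈ cylinder x n := by
  simp only [branch, node, mem_range, encode_injective.eq_iff, res_eq_res_iff,
    mem_cylinder_comm y x]
  exact ⟨fun ⟨_, rfl, h⟩ => h, fun h => ⟨n, rfl, h⟩⟩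

theorem sibling_mem_siblings_iff : sibling x n ∈ siblings y ↔ y ∈ cylinder x (n + 1) := by
  have h (k : ℕ) : ((!y k) :: res y k = (!x n) :: res x n) ↔ res y (k + 1) = res x (n + 1) := by
    simp [res_succ]
  simp only [siblings, sibling, mem_range, encode_injective.eq_iff, h, res_eq_res_iff,
    mem_cylinder_comm x y, Nat.add_right_cancel_iff]
  exact ⟨fun ⟨_, rfl, h⟩ => h, fun h => ⟨n, rfl, h⟩⟩

theorem sibling_mem_branch_iff : sibling x n ∈ branch y ↔ y ∈ cylinder x n ∧ y n = !x n := by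
  simp only [branch, sibling, node, mem_range, encode_injective.eq_iff]
  constructor
  · rintro ⟨_ | k, hk⟩
    · simp at hk
    · obtain ⟨hkn, hres⟩ := List.cons.inj hk
      obtain ⟨rfl, hy⟩ := res_eq_res_iff.1 hres
      exact ⟨(mem_cylinder_comm _ _ _).1 hy, hkn⟩
  · rintro ⟨hy, hyn⟩
    exact ⟨n + 1, by rw [res_succ, hyn, res_eq_res.2 fun i hi => hy i hi]⟩

theorem branch_inter_branch (x y : ℕ → Bool) :
    branch x ∩ branch y = node x '' {n | y ∈ cylinder x n} := by
  rw [branch, ← image_preimage_eq_range_inter]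
  exact congrArg _ (ext fun n => node_mem_branch_iff)

theorem siblings_inter_siblings (x y : ℕ → Bool) :
    siblings x ∩ siblings y = sibling x '' {n | y ∈ cylinder x (n + 1)} := by
  rw [siblings, ← image_preimage_eq_range_inter]
  exact congrArg _ (ext fun n => sibling_mem_siblings_iff)

theorem siblings_inter_branch (x y : ℕ → Bool) :
    siblings x ∩ branch y = sibling x '' {n | y ∈ cylinder x n ∧ y n = !x n} := by
  rw [siblings, ← image_preimage_eq_range_inter]
  exact congrArg _ (ext fun n => sibling_mem_branch_iff)

theorem branch_inter_branch_finite (h : x ≠ y) : (branch x ∩ branch y).Finite := by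
  rw [branch_inter_branch]
  exact (finite_setOf_mem_cylinder h).image _

theorem siblings_inter_siblings_finite (h : x ≠ y) : (siblings x ∩ siblings y).Finite := by
  rw [siblings_inter_siblings]
  exact ((finite_setOf_mem_cylinder h).subset fun n hn => cylinder_anti x n.le_succ hn).image _

theorem siblings_inter_branch_self (x : ℕ → Bool) : siblings x ∩ branch x = ∅ := by
  simp [siblings_inter_branch]

theorem siblings_inter_branch_finite (x y : ℕ → Bool) : (siblings x ∩ branch y).Finite := by
  rcases eq_or_ne x y with rfl | h
  · simp [siblings_inter_branch_self]
  · rw [siblings_inter_branch]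
    exact ((finite_setOf_mem_cylinder h).subset fun n hn => hn.1).image _

theorem siblings_inter_branch_nonempty (h : x ≠ y) : (siblings x ∩ branch y).Nonempty := by
  rw [siblings_inter_branch]
  exact ⟨_, firstDiff y x,
    ⟨mem_cylinder_firstDiff y x, Bool.eq_not.2 (apply_firstDiff_ne h.symm)⟩, rfl⟩

theorem eventually_branch_inter_eq {z : ℕ → Bool} (h : x ≠ z) :
    ∀ᶠ y in 𝓝 z, branch y ∩ branch x = branch z ∩ branch x := by
  filter_upwards [eventually_mem_cylinder_iff h] with y hy
  simp only [inter_comm _ (branch x), branch_inter_branch, hy]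

theorem eventually_siblings_inter_eq {z : ℕ → Bool} (h : x ≠ z) :
    ∀ᶠ y in 𝓝 z, siblings y ∩ siblings x = siblings z ∩ siblings x := by
  filter_upwards [eventually_mem_cylinder_iff h] with y hy
  simp only [inter_comm _ (siblings x), siblings_inter_siblings, hy]

theorem branch_injective : Injective branch := fun _ _ hxy =>
  (eq_of_forall_mem_cylinder fun n => node_mem_branch_iff.1 (hxy ▸ mem_range_self n)).symm

theorem siblings_injective : Injective siblings := fun x _ hxy =>
  (eq_of_forall_mem_cylinder fun n => cylinder_anti x n.le_succ
    (sibling_mem_siblings_iff.1 (hxy ▸ mem_range_self (f := sibling x) n))).symm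

theorem siblings_ne_branch (x y : ℕ → Bool) : siblings x ≠ branch y := by
  intro h
  obtain ⟨n, hn⟩ : node y 0 ∈ siblings x := h ▸ mem_range_self 0
  simp [sibling, node] at hn

theorem branch_infinite (x : ℕ → Bool) : (branch x).Infinite :=
  infinite_range_of_injective fun _ _ h =>
    (res_eq_res_iff.1 (encode_injective h)).1

theorem siblings_infinite (x : ℕ → Bool) : (siblings x).Infinite :=
  infinite_range_of_injective fun _ _ h => by
    simpa using congrArg List.length (encode_injective h)

def family : Set (Set ℕ) := range siblings ∪ range branch

theorem mk_family : #family = 𝔠 := by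
  refine le_antisymm ((mk_union_le _ _).trans ?_) ?_
  · simp [mk_range_eq _ siblings_injective, mk_range_eq _ branch_injective]
  · calc 𝔠 = #(range branch) := by simp [mk_range_eq _ branch_injective]
      _ ≤ #family := mk_le_mk_of_subset subset_union_right

theorem adFamily_family : ADFamily family := by
  refine ⟨fun h => ?_, ?_, ?_⟩
  · have := (le_aleph0_iff_set_countable.2 h).trans_lt aleph0_lt_continuum
    exact this.ne mk_family
  · rintro _ (⟨x, rfl⟩ | ⟨x, rfl⟩)
    exacts [siblings_infinite x, branch_infinite x]
  · rintro _ (⟨x, rfl⟩ | ⟨x, rfl⟩) _ (⟨y, rfl⟩ | ⟨y, rfl⟩) hne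
    · exact siblings_inter_siblings_finite (ne_of_apply_ne _ hne)
    · exact siblings_inter_branch_finite x y
    · exact inter_comm (siblings y) _ ▸ siblings_inter_branch_finite y x
    · exact branch_inter_branch_finite (ne_of_apply_ne _ hne)

theorem containsNLuzinGap_family : ContainsNLuzinGap family 2 :=
  containsNLuzinGap_two (by simpa using aleph_one_le_continuum) siblings_injective branch_injective
    siblings_ne_branch (fun x => Or.inl (mem_range_self x)) (fun x => Or.inr (mem_range_self x))
    siblings_inter_branch_self fun _ _ => siblings_inter_branch_nonempty

theorem not_isLuzinFamily_of_subset (ℬ : Set (Set ℕ)) (hℬ : ℬ ⊆ family) : ¬IsLuzinFamily ℬ := by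
  intro hL
  have hsiblings := hL.countable_of_image_subset siblings_injective
    (fun _ _ => eventually_siblings_inter_eq) (image_preimage_subset siblings ℬ)
  have hbranch := hL.countable_of_image_subset branch_injective
    (fun _ _ => eventually_branch_inter_eq) (image_preimage_subset branch ℬ)
  refine hL.1.1 (((hsiblings.image siblings).union (hbranch.image branch)).mono fun P hP => ?_)
  rcases hℬ hP with ⟨x, rfl⟩ | ⟨x, rfl⟩
  exacts [Or.inl ⟨x, hP, rfl⟩, Or.inr ⟨x, hP, rfl⟩]

end CantorTree

/-- there is an a.d.-family of cardinality continuum containing a `2`-Luzin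
gap but containing no Luzin subfamily. -/
theorem statement3 :
    ∃ 𝒜 : Set (Set ℕ), ADFamily 𝒜 ∧ Cardinal.mk 𝒜 = Cardinal.continuum ∧
      ContainsNLuzinGap 𝒜 2 ∧ ∀ ℬ ⊆ 𝒜, ¬IsLuzinFamily ℬ :=
  ⟨CantorTree.family, CantorTree.adFamily_family, CantorTree.mk_family,
    CantorTree.containsNLuzinGap_family, CantorTree.not_isLuzinFamily_of_subset⟩
end

section
/- Suppose 𝒜 is an a.d.-family and n, k ∈ ℕ with 2 ≤ n < k. If 𝒜 contains an n-Luzin gap, then 𝒜 contains a k-Luzin gap. -/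
open Set Filter Cardinal

/-!
Pad the `n`-gap to `k` rows, taking the new rows from the fresh copies `{ω·α + t}` of `ω₁`
inside `ω₁`. All rows are distinct members of `𝒜`, so at each level `α` their pairwise
intersections lie below some `N α ≥ m`. On an uncountable set of levels where `N α` and the
traces of all rows below `N α` are constant, the padded family is a gap with `m' = N α`: a point
`x ≥ m` of `B i α ∩ B j β` with `x < m'` would, the traces being equal, also lie in `B j α`,
contradicting `B i α ∩ B j α ⊆ [0, m)`.
-/

open scoped Ordinal

lemma mk_Iio_omega1 : #(Iio omega1) = ℵ₁ := by
  rw [Cardinal.mk_Iio_ordinal, omega1, Cardinal.card_ord, lift_aleph, Ordinal.lift_one]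

lemma aleph_one_le_mk_of_not_countable {α : Type*} {S : Set α} (hS : ¬S.Countable) :
    ℵ₁ ≤ #S := by
  rwa [← le_aleph0_iff_set_countable, not_le, ← aleph_one_le_iff] at hS

lemma not_countable_Iio_omega1 : ¬(Iio omega1).Countable := by
  rw [← le_aleph0_iff_set_countable, mk_Iio_omega1, not_le]
  exact aleph0_lt_aleph_one

lemma exists_mapsTo_injOn_Iio_omega1 {S : Set Ordinal.{0}} (hS : ¬S.Countable) :
    ∃ e : Ordinal.{0} → Ordinal.{0}, MapsTo e (Iio omega1) S ∧ InjOn e (Iio omega1) := by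
  classical
  obtain ⟨f⟩ : Nonempty (Iio omega1 ↪ S) :=
    (le_def _ _).1 (mk_Iio_omega1 ▸ aleph_one_le_mk_of_not_countable hS)
  refine ⟨fun ξ => if h : ξ < omega1 then f ⟨ξ, h⟩ else 0, fun ξ hξ => ?_,
    fun ξ hξ η hη hξη => ?_⟩
  · simp only [dif_pos (show ξ < omega1 from hξ), Subtype.coe_prop]
  · simp only [dif_pos (show ξ < omega1 from hξ), dif_pos (show η < omega1 from hη)] at hξη
    simpa using f.injective (Subtype.ext hξη)

lemma exists_not_countable_fiber {α X : Type*} [Countable X] (f : α → X) {S : Set α}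
    (hS : ¬S.Countable) : ∃ c, ¬{a ∈ S | f a = c}.Countable := by
  by_contra! h
  refine hS ((countable_iUnion h).mono fun a ha => ?_)
  exact mem_iUnion_of_mem (f a) ⟨ha, rfl⟩

lemma omega0_mul_add_natCast_lt_omega1 {α : Ordinal.{0}} (hα : α < omega1) (t : ℕ) :
    ω * α + t < omega1 := by
  have hω : ω < omega1 := by
    rw [omega1, lt_ord, Ordinal.card_omega0]
    exact aleph0_lt_aleph_one
  exact Ordinal.isPrincipal_add_ord (aleph0_le_aleph 1)
    (Ordinal.isPrincipal_mul_ord (aleph0_le_aleph 1) hω hα) ((Ordinal.natCast_lt_omega0 t).trans hω)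

lemma omega0_mul_add_natCast_inj {α β : Ordinal} {s t : ℕ} :
    ω * α + s = ω * β + t ↔ α = β ∧ s = t := by
  refine ⟨fun h => ⟨?_, ?_⟩, fun ⟨hαβ, hst⟩ => hαβ ▸ hst ▸ rfl⟩
  · simpa [Ordinal.mul_add_div _ Ordinal.omega0_ne_zero,
      Ordinal.div_eq_zero_of_lt (Ordinal.natCast_lt_omega0 _)] using congrArg (· / ω) h
  · simpa [Ordinal.mod_eq_of_lt (Ordinal.natCast_lt_omega0 _)] using congrArg (· % ω) h

def LuzinGapOn {n : ℕ} (S : Set Ordinal.{0}) (B : Fin n → Ordinal.{0} → Set ℕ) (m : ℕ) : Prop :=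
  (∀ α ∈ S, ∀ i j, i ≠ j → B i α ∩ B j α ⊆ Iio m) ∧
    ∀ α ∈ S, ∀ β ∈ S, α ≠ β → ∃ i j, i ≠ j ∧ ∃ x ∈ B i α ∩ B j β, m ≤ x

lemma injOn_uncurry_iff {n : ℕ} {B : Fin n → Ordinal.{0} → Set ℕ} :
    InjOn (Function.uncurry B) (Set.univ ×ˢ Iio omega1) ↔
      (∀ i : Fin n, ∀ α < omega1, ∀ β < omega1, α ≠ β → B i α ≠ B i β) ∧
      (∀ i j : Fin n, i ≠ j → ∀ α < omega1, ∀ β < omega1, B i α ≠ B j β) := by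
  constructor
  · intro h
    refine ⟨fun i α hα β hβ hαβ hB => hαβ ?_, fun i j hij α hα β hβ hB => hij ?_⟩
    · exact congrArg Prod.snd (@h (i, α) ⟨trivial, hα⟩ (i, β) ⟨trivial, hβ⟩ hB)
    · exact congrArg Prod.fst (@h (i, α) ⟨trivial, hα⟩ (j, β) ⟨trivial, hβ⟩ hB)
  · rintro ⟨hrow, hcol⟩ ⟨i, α⟩ ⟨-, hα⟩ ⟨j, β⟩ ⟨-, hβ⟩ hB
    by_contra hne
    by_cases hij : i = j
    · subst hij
      exact hrow i α hα β hβ (by simpa using hne) hB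
    · exact hcol i j hij α hα β hβ hB

lemma luzinGapOn_Iio_omega1_iff {n : ℕ} {B : Fin n → Ordinal.{0} → Set ℕ} {m : ℕ} :
    LuzinGapOn (Iio omega1) B m ↔
      (∀ i j : Fin n, i < j → ∀ α < omega1, B i α ∩ B j α ⊆ Set.Iio m) ∧
      (∀ α < omega1, ∀ β < omega1, α ≠ β →
        ¬(⋃ (i : Fin n) (j : Fin n) (_ : i ≠ j), B i α ∩ B j β) ⊆ Set.Iio m) := by
  simp only [LuzinGapOn, mem_Iio, not_subset, mem_iUnion, not_lt]
  refine and_congr ⟨fun h i j hij α hα => h α hα i j hij.ne, fun h α hα i j hij => ?_⟩ ?_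
  · rcases hij.lt_or_gt with hij | hij
    · exact h i j hij α hα
    · exact inter_comm (B i α) _ ▸ h j i hij α hα
  · exact forall₄_congr fun _ _ _ _ => imp_congr_right fun _ =>
      ⟨fun ⟨i, j, hij, x, hx, hmx⟩ => ⟨x, ⟨i, j, hij, hx⟩, hmx⟩,
        fun ⟨x, ⟨i, j, hij, hx⟩, hmx⟩ => ⟨i, j, hij, x, hx, hmx⟩⟩

lemma isNLuzinGap_iff {n : ℕ} {B : Fin n → Ordinal.{0} → Set ℕ} :
    IsNLuzinGap n B ↔
      InjOn (Function.uncurry B) (Set.univ ×ˢ Iio omega1) ∧ ∃ m, LuzinGapOn (Iio omega1) B m := by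
  simp only [IsNLuzinGap, injOn_uncurry_iff, luzinGapOn_Iio_omega1_iff, and_assoc]

lemma LuzinGapOn.comp {n : ℕ} {S T : Set Ordinal.{0}} {B : Fin n → Ordinal.{0} → Set ℕ} {m : ℕ}
    (h : LuzinGapOn S B m) {e : Ordinal.{0} → Ordinal.{0}} (he : MapsTo e T S)
    (he' : InjOn e T) : LuzinGapOn T (fun i α => B i (e α)) m :=
  ⟨fun α hα => h.1 (e α) (he hα),
    fun _ hα _ hβ hαβ => h.2 _ (he hα) _ (he hβ) (he'.ne hα hβ hαβ)⟩

lemma isNLuzinGap_comp {k : ℕ} {S : Set Ordinal.{0}} {D : Fin k → Ordinal.{0} → Set ℕ} {m : ℕ}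
    (hinj : InjOn (Function.uncurry D) (Set.univ ×ˢ S)) (hD : LuzinGapOn S D m)
    {e : Ordinal.{0} → Ordinal.{0}} (he : MapsTo e (Iio omega1) S) (he' : InjOn e (Iio omega1)) :
    IsNLuzinGap k (fun i α => D i (e α)) :=
  isNLuzinGap_iff.2 ⟨hinj.comp (injOn_id _ |>.prodMap he') (mapsTo_id _ |>.prodMap he),
    m, hD.comp he he'⟩

lemma exists_inter_subset_Iio {k : ℕ} (D : Fin k → Set ℕ)
    (hD : ∀ i j, i ≠ j → (D i ∩ D j).Finite) : ∃ N, ∀ i j, i ≠ j → D i ∩ D j ⊆ Iio N := by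
  obtain ⟨N, hN⟩ := (finite_iUnion fun i => finite_iUnion fun j =>
    finite_iUnion fun hij => hD i j hij).bddAbove
  exact ⟨N + 1, fun i j hij x hx =>
    Nat.lt_succ_of_le (hN (mem_iUnion.2 ⟨i, mem_iUnion.2 ⟨j, mem_iUnion.2 ⟨hij, hx⟩⟩⟩))⟩

theorem exists_luzinGapOn_subset {n k : ℕ} {S : Set Ordinal.{0}} (hS : ¬S.Countable)
    {D : Fin k → Ordinal.{0} → Set ℕ} (σ : Fin n ↪ Fin k) {m : ℕ}
    (hσ : LuzinGapOn S (fun i α => D (σ i) α) m)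
    (hD : ∀ α ∈ S, ∀ i j, i ≠ j → (D i α ∩ D j α).Finite) :
    ∃ T ⊆ S, ¬T.Countable ∧ ∃ m', LuzinGapOn T D m' := by
  classical
  choose! N hN using fun α hα => exists_inter_subset_Iio (fun i => D i α) (hD α hα)
  let trace (α : Ordinal.{0}) : ℕ × (Fin k → Finset ℕ) :=
    (N α, fun i => {x ∈ Finset.range (N α) | x ∈ D i α})
  obtain ⟨c, hc⟩ := exists_not_countable_fiber trace hS
  refine ⟨{α ∈ S | trace α = c}, sep_subset _ _, hc, c.1, ?_, ?_⟩
  · rintro α ⟨hα, rfl⟩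
    exact hN α hα
  · rintro α ⟨hα, hcα⟩ β ⟨hβ, rfl⟩ hαβ
    obtain ⟨i, j, hij, x, ⟨hxα, hxβ⟩, hmx⟩ := hσ.2 α hα β hβ hαβ
    refine ⟨σ i, σ j, σ.injective.ne hij, x, ⟨hxα, hxβ⟩, ?_⟩
    by_contra! hx
    have hxα' : x ∈ D (σ j) α := by
      have hmem : x ∈ (trace β).2 (σ j) := by simpa [trace] using ⟨hx, hxβ⟩
      rw [← hcα] at hmem
      exact (Finset.mem_filter.1 hmem).2
    exact (hσ.1 α hα i j hij ⟨hxα, hxα'⟩).not_ge hmx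

def padRows {n : ℕ} (k : ℕ) (hn : 0 < n) (B : Fin n → Ordinal.{0} → Set ℕ) :
    Fin k → Ordinal.{0} → Set ℕ :=
  fun i α => B ⟨i % n, Nat.mod_lt _ hn⟩ (ω * α + (i / n : ℕ))

section padRows

variable {n k : ℕ} (hn : 0 < n) {B : Fin n → Ordinal.{0} → Set ℕ}

lemma padRows_mem {𝒜 : Set (Set ℕ)} (hB : ∀ i, ∀ α < omega1, B i α ∈ 𝒜) (i : Fin k)
    {α : Ordinal.{0}} (hα : α < omega1) : padRows k hn B i α ∈ 𝒜 :=
  hB _ _ (omega0_mul_add_natCast_lt_omega1 hα _)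

lemma padRows_castLE (hnk : n ≤ k) (i : Fin n) (α : Ordinal.{0}) :
    padRows k hn B (Fin.castLE hnk i) α = B i (ω * α) := by
  simp [padRows, Nat.mod_eq_of_lt i.2, Nat.div_eq_of_lt i.2]

lemma injOn_padRows (hB : InjOn (Function.uncurry B) (Set.univ ×ˢ Iio omega1)) :
    InjOn (Function.uncurry (padRows k hn B)) (Set.univ ×ˢ Iio omega1) := by
  rintro ⟨i, α⟩ ⟨-, hα⟩ ⟨j, β⟩ ⟨-, hβ⟩ hij
  have := @hB (_, _) ⟨trivial, omega0_mul_add_natCast_lt_omega1 hα (i / n)⟩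
    (_, _) ⟨trivial, omega0_mul_add_natCast_lt_omega1 hβ (j / n)⟩ hij
  simp only [Prod.mk.injEq, Fin.mk.injEq, omega0_mul_add_natCast_inj] at this
  obtain ⟨hmod, hαβ, hdiv⟩ := this
  refine Prod.ext (Fin.ext ?_) hαβ
  rw [← Nat.div_add_mod i n, ← Nat.div_add_mod j n, hmod, hdiv]

end padRows

/-- if `𝒜` contains an `n`-Luzin gap and `2 ≤ n < k`, then `𝒜` contains
a `k`-Luzin gap. -/
theorem statement4 (𝒜 : Set (Set ℕ)) (h𝒜 : ADFamily 𝒜) (n k : ℕ)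
    (hn : 2 ≤ n) (hnk : n < k) (h : ContainsNLuzinGap 𝒜 n) :
    ContainsNLuzinGap 𝒜 k := by
  obtain ⟨B, hB𝒜, hB⟩ := h
  obtain ⟨hBinj, m, hBm⟩ := isNLuzinGap_iff.1 hB
  have hn0 : 0 < n := by omega
  set D := padRows k hn0 B
  have hDinj := injOn_padRows hn0 hBinj (k := k)
  have hDm : LuzinGapOn (Iio omega1) (fun i α => D (Fin.castLEEmb hnk.le i) α) m := by
    simpa [D, padRows_castLE] using hBm.comp (e := (ω * ·))
      (fun α hα => by simpa using omega0_mul_add_natCast_lt_omega1 hα 0)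
      (mul_right_injective₀ Ordinal.omega0_ne_zero).injOn
  have hDfin : ∀ α ∈ Iio omega1, ∀ i j, i ≠ j → (D i α ∩ D j α).Finite := fun α hα i j hij =>
    h𝒜.2.2 _ (padRows_mem hn0 hB𝒜 i hα) _ (padRows_mem hn0 hB𝒜 j hα)
      (hDinj.ne (x := (i, α)) (y := (j, α)) ⟨trivial, hα⟩ ⟨trivial, hα⟩ (by simpa using hij))
  obtain ⟨T, hT, hTunc, m', hDT⟩ :=
    exists_luzinGapOn_subset not_countable_Iio_omega1 (Fin.castLEEmb hnk.le) hDm hDfin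
  obtain ⟨e, heT, he⟩ := exists_mapsTo_injOn_Iio_omega1 hTunc
  exact ⟨fun i α => D i (e α), fun i α hα => padRows_mem hn0 hB𝒜 i (hT (heT hα)),
    isNLuzinGap_comp (hDinj.mono (prod_mono subset_rfl hT)) hDT heT he⟩
end
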